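/- arXiv:2511.10851 — 3 statements merged into one kernel-verified Lean document; each statement's English description precedes it below -/
import Mathlib

section
/- Suppose A = {b + i·c : 0 ≤ i ≤ N²} is an arithmetic progression (b ≥ 0, c > 0, N a positive integer) such that every k ∈ {1,...,n} divides some element of A. Define S = {b + i·N·c : 0 ≤ i ≤ N} and T = {i·c : 0 ≤ i ≤ N}. Then every k ∈ {1,...,n} divides s − t for some s ∈ S and t ∈ T. -/
theorem stmt4 (n : ℕ) (b c : ℤ) (hb : 0 ≤ b) (hc : 0 < c) (N : ℕ) (hN : 0 < N)
    (hdiv : ∀ k ∈ Finset.Icc 1 n, ∃ i : ℕ, i ≤ N ^ 2 ∧ (k : ℤ) ∣ b + i * c) :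
    ∀ k ∈ Finset.Icc 1 n, ∃ i₁ ≤ N, ∃ i₀ ≤ N,
      (k : ℤ) ∣ (b + (i₁ : ℤ) * N * c) - (i₀ : ℤ) * c := by
  intro k hk
  obtain ⟨i, hiN, hdvd⟩ := hdiv k hk
  rcases Nat.eq_zero_or_pos i with rfl | hi
  · exact ⟨0, Nat.zero_le _, 0, Nat.zero_le _, by simpa using hdvd⟩
  · set i₁ : ℕ := (i - 1) / N + 1 with hi₁
    have hmod := Nat.div_add_mod (i - 1) N
    have hmlt : (i - 1) % N < N := Nat.mod_lt _ hN
    have hdlt : (i - 1) / N < N := by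
      rw [Nat.div_lt_iff_lt_mul hN]
      have : i ≤ N * N := by nlinarith [sq_nonneg N, hiN, pow_two N ▸ hiN]
      omega
    have h1 : i₁ ≤ N := by omega
    have e : i₁ * N = N * ((i - 1) / N) + N := by rw [hi₁]; ring
    obtain ⟨m, hm⟩ : ∃ m, N * ((i - 1) / N) = m := ⟨_, rfl⟩
    rw [hm] at e hmod
    have h2 : i ≤ i₁ * N := by omega
    have h3 : i₁ * N - i < N := by omega
    refine ⟨i₁, h1, i₁ * N - i, by omega, ?_⟩
    have key : (b + (i₁ : ℤ) * N * c) - ((i₁ * N - i : ℕ) : ℤ) * c = b + i * c := by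
      have : ((i₁ * N - i : ℕ) : ℤ) = (i₁ : ℤ) * N - i := by
        push_cast [Nat.cast_sub h2]; ring
      rw [this]; ring
    rw [key]; exact hdvd
end

section
/- Let q be a prime power, let h ∈ F_q[X] be monic squarefree of degree at most n, and let s, t be nonnegative integers with s ≠ t. Then gcd(X^{q^s} − X^{q^t}, h) has degree equal to the sum of the degrees of the monic irreducible factors of h whose degree divides |s − t|. -/
/-!
Since `q`-th powering fixes the coefficients,
`(X ^ q ^ k - X) ^ q ^ m = X ^ q ^ (k + m) - X ^ q ^ m`, so an irreducible `g` divides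
`X ^ q ^ s - X ^ q ^ t` iff it divides `X ^ q ^ |s - t| - X`, i.e. iff `deg g ∣ |s - t|`.
For squarefree `h`, `gcd(a, h)` is the product of the distinct prime factors of `h` dividing `a`.
-/

open Polynomial UniqueFactorizationMonoid

theorem associated_gcd_prod_filter_dvd {R : Type*} [EuclideanDomain R] [DecidableEq R]
    [NormalizationMonoid R] [UniqueFactorizationMonoid R] {a h : R} (hh : Squarefree h)
    [DecidablePred (· ∣ a)] :
    Associated (EuclideanDomain.gcd a h) ((normalizedFactors h).filter (· ∣ a)).prod := by
  set S := (normalizedFactors h).filter (· ∣ a)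
  have hSh : S.prod ∣ h :=
    (Multiset.prod_dvd_prod_of_le (Multiset.filter_le _ _)).trans
      (prod_normalizedFactors hh.ne_zero).dvd
  have hSa : S.prod ∣ a := by
    rcases eq_or_ne a 0 with rfl | ha
    · exact dvd_zero _
    have hnodup : S.Nodup :=
      ((squarefree_iff_nodup_normalizedFactors hh.ne_zero).mp hh).filter _
    refine (Multiset.prod_dvd_prod_of_le
      ((Multiset.le_iff_subset hnodup).mpr fun g hg => ?_)).trans (prod_normalizedFactors ha).dvd
    obtain ⟨hgh, hga⟩ := Multiset.mem_filter.mp hg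
    exact (mem_normalizedFactors_iff' ha).mpr
      ⟨irreducible_of_normalized_factor g hgh, normalize_normalized_factor g hgh, hga⟩
  have hG : EuclideanDomain.gcd a h ≠ 0 := fun h0 =>
    hh.ne_zero (EuclideanDomain.gcd_eq_zero_iff.mp h0).2
  have hGS : normalizedFactors (EuclideanDomain.gcd a h) ≤ S :=
    Multiset.le_filter.mpr
      ⟨(dvd_iff_normalizedFactors_le_normalizedFactors hG hh.ne_zero).mp
          (EuclideanDomain.gcd_dvd_right a h),
        fun g hg => (dvd_of_mem_normalizedFactors hg).trans (EuclideanDomain.gcd_dvd_left a h)⟩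
  exact associated_of_dvd_dvd
    ((prod_normalizedFactors hG).symm.dvd.trans (Multiset.prod_dvd_prod_of_le hGS))
    (EuclideanDomain.dvd_gcd hSa hSh)

namespace Polynomial

variable {K : Type*} [Field K]

theorem natDegree_gcd_eq_sum_natDegree_filter_dvd [DecidableEq K] {a h : K[X]}
    (hh : Squarefree h) [DecidablePred (· ∣ a)] :
    (EuclideanDomain.gcd a h).natDegree =
      (((normalizedFactors h).filter (· ∣ a)).map natDegree).sum := by
  rw [natDegree_eq_of_degree_eq (degree_eq_degree_of_associated
      (associated_gcd_prod_filter_dvd hh)), natDegree_multiset_prod_of_monic]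
  intro g hg
  have hgh := (Multiset.mem_filter.mp hg).1
  rw [← normalize_normalized_factor g hgh]
  exact monic_normalize (prime_of_normalized_factor g hgh).ne_zero

variable [Finite K]

theorem X_pow_card_pow_add_sub_X_pow_card_pow (k m : ℕ) :
    (X ^ Nat.card K ^ (k + m) - X ^ Nat.card K ^ m : K[X]) =
      (X ^ Nat.card K ^ k - X) ^ Nat.card K ^ m := by
  have := Fintype.ofFinite K
  rw [Nat.card_eq_fintype_card]
  induction m with
  | zero => simp
  | succ m ih =>
    calc (X ^ Fintype.card K ^ (k + (m + 1)) - X ^ Fintype.card K ^ (m + 1) : K[X])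
        = (X ^ Fintype.card K ^ (k + m) - X ^ Fintype.card K ^ m) ^ Fintype.card K := by
          rw [← FiniteField.expand_card, map_sub, map_pow, map_pow, expand_X, ← pow_mul,
            ← pow_mul, ← pow_succ', ← pow_succ', add_assoc]
      _ = (X ^ Fintype.card K ^ k - X) ^ Fintype.card K ^ (m + 1) := by
          rw [ih, ← pow_mul, ← pow_succ]

theorem _root_.Irreducible.dvd_X_pow_card_pow_sub_X_pow_card_pow_iff {g : K[X]}
    (hg : Irreducible g) (s t : ℕ) :
    g ∣ X ^ Nat.card K ^ s - X ^ Nat.card K ^ t ↔ g.natDegree ∣ max s t - min s t := by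
  wlog hts : t ≤ s generalizing s t
  · rw [dvd_sub_comm, max_comm, min_comm]
    exact this t s (le_of_not_ge hts)
  obtain ⟨k, rfl⟩ := Nat.exists_eq_add_of_le hts
  rw [max_eq_left hts, min_eq_right hts, Nat.add_sub_cancel_left, add_comm,
    X_pow_card_pow_add_sub_X_pow_card_pow,
    hg.prime.dvd_pow_iff_dvd (pow_ne_zero _ Nat.card_pos.ne'),
    hg.natDegree_dvd_iff_dvd_X_pow_card_pow_sub_X]

end Polynomial

theorem stmt18_general (F : Type*) [Field F] [Fintype F] [DecidableEq F]
    (h : F[X]) (hsq : Squarefree h)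
    (s t : ℕ) :
    (EuclideanDomain.gcd
        (X ^ (Fintype.card F) ^ s - X ^ (Fintype.card F) ^ t : F[X]) h).natDegree =
      (((UniqueFactorizationMonoid.normalizedFactors h).filter
          (fun g => g.natDegree ∣ (max s t - min s t))).map
        Polynomial.natDegree).sum := by
  classical
  rw [natDegree_gcd_eq_sum_natDegree_filter_dvd hsq]
  congr 2
  refine Multiset.filter_congr fun g hg => ?_
  rw [← Nat.card_eq_fintype_card]
  exact (irreducible_of_normalized_factor g hg).dvd_X_pow_card_pow_sub_X_pow_card_pow_iff s t

theorem stmt18 (F : Type*) [Field F] [Fintype F] [DecidableEq F]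
    (n : ℕ) (h : F[X]) (hmonic : h.Monic) (hsq : Squarefree h)
    (hdeg : h.natDegree ≤ n) (s t : ℕ) (hst : s ≠ t) :
    (EuclideanDomain.gcd
        (X ^ (Fintype.card F) ^ s - X ^ (Fintype.card F) ^ t : F[X]) h).natDegree =
      (((UniqueFactorizationMonoid.normalizedFactors h).filter
          (fun g => g.natDegree ∣ (max s t - min s t))).map
        Polynomial.natDegree).sum :=
  stmt18_general F h hsq s t
end

section
/- Let S and T be finite sets of nonnegative integers such that for every i ∈ {1,...,n} there exist s ∈ S, t ∈ T with i dividing s − t. Let q be a prime power and let f ∈ F_q[X] be a monic squarefree polynomial of degree n. Then f divides ∏_{s ∈ S, t ∈ T} (X^{q^s} − X^{q^t}). -/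
open Polynomial UniqueFactorizationMonoid

/- A squarefree polynomial divides every polynomial that all its irreducible factors divide.
An irreducible factor `g` of `f` has degree `d ≤ n`, so `d ∣ s - t` for some `s ∈ S`, `t ∈ T`.
Since `F[X]/(g)` has `q ^ d` elements, `g ∣ X ^ q ^ m - X` whenever `d ∣ m`, and
`X ^ q ^ m - X` divides `X ^ q ^ (m + t) - X ^ q ^ t` because `a - b ∣ a ^ k - b ^ k`. -/

theorem Squarefree.dvd_of_forall_irreducible_dvd {M : Type*} [CommMonoidWithZero M]
    [NormalizationMonoid M] [UniqueFactorizationMonoid M] {a b : M} (ha : Squarefree a)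
    (h : ∀ p, Irreducible p → p ∣ a → p ∣ b) : a ∣ b := by
  nontriviality M
  refine (ha.isRadical.dvd_radical ha.ne_zero).trans <|
    Finset.prod_dvd_of_isRelPrime pairwise_primeFactors_isRelPrime fun p hp => ?_
  rw [mem_primeFactors] at hp
  exact h p (irreducible_of_normalized_factor p hp) (dvd_of_mem_normalizedFactors hp)

theorem X_pow_pow_sub_X_dvd_X_pow_pow_sub_X_pow_pow {R : Type*} [CommRing R] (q : ℕ)
    {s t : ℕ} (hts : t ≤ s) : (X ^ q ^ (s - t) - X : R[X]) ∣ X ^ q ^ s - X ^ q ^ t := by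
  simpa only [← pow_mul, ← pow_add, Nat.sub_add_cancel hts] using
    sub_dvd_pow_sub_pow (X ^ q ^ (s - t) : R[X]) X (q ^ t)

namespace Irreducible

variable {F : Type*} [Field F] [Fintype F] {g : F[X]}

theorem dvd_X_pow_card_pow_sub_X_pow_card_pow_of_le (hg : Irreducible g) {s t : ℕ}
    (hts : t ≤ s) (hd : g.natDegree ∣ s - t) :
    g ∣ X ^ Fintype.card F ^ s - X ^ Fintype.card F ^ t :=
  Fintype.card_eq_nat_card (α := F) ▸ (hg.natDegree_dvd_iff_dvd_X_pow_card_pow_sub_X.mp hd).trans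
    (X_pow_pow_sub_X_dvd_X_pow_pow_sub_X_pow_pow _ hts)

theorem dvd_X_pow_card_pow_sub_X_pow_card_pow (hg : Irreducible g) {s t : ℕ}
    (hd : (g.natDegree : ℤ) ∣ (s : ℤ) - t) :
    g ∣ X ^ Fintype.card F ^ s - X ^ Fintype.card F ^ t := by
  rcases le_total t s with hts | hst
  · refine hg.dvd_X_pow_card_pow_sub_X_pow_card_pow_of_le hts ?_
    exact Int.natCast_dvd_natCast.mp (by rwa [Nat.cast_sub hts])
  · refine dvd_sub_comm.mp (hg.dvd_X_pow_card_pow_sub_X_pow_card_pow_of_le hst ?_)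
    exact Int.natCast_dvd_natCast.mp (by rwa [Nat.cast_sub hst, dvd_sub_comm])

end Irreducible

theorem stmt19_general (F : Type*) [Field F] [Fintype F] (n : ℕ)
    (S T : Finset ℕ)
    (hdiv : ∀ i ∈ Finset.Icc 1 n, ∃ s ∈ S, ∃ t ∈ T, (i : ℤ) ∣ (s : ℤ) - t)
    (f : F[X]) (hsq : Squarefree f) (hdeg : f.natDegree = n) :
    f ∣ ∏ s ∈ S, ∏ t ∈ T,
      (X ^ (Fintype.card F) ^ s - X ^ (Fintype.card F) ^ t : F[X]) := by
  classical
  refine hsq.dvd_of_forall_irreducible_dvd fun g hg hgf => ?_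
  have hle : g.natDegree ≤ n := hdeg ▸ natDegree_le_of_dvd hgf hsq.ne_zero
  obtain ⟨s, hs, t, ht, hst⟩ := hdiv _ (Finset.mem_Icc.mpr ⟨hg.natDegree_pos, hle⟩)
  set q := Fintype.card F
  calc g ∣ X ^ q ^ s - X ^ q ^ t := hg.dvd_X_pow_card_pow_sub_X_pow_card_pow hst
    _ ∣ ∏ t ∈ T, (X ^ q ^ s - X ^ q ^ t) := Finset.dvd_prod_of_mem _ ht
    _ ∣ ∏ s ∈ S, ∏ t ∈ T, (X ^ q ^ s - X ^ q ^ t) :=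
        Finset.dvd_prod_of_mem (fun s => ∏ t ∈ T, (X ^ q ^ s - X ^ q ^ t)) hs

theorem stmt19 (F : Type*) [Field F] [Fintype F] (n : ℕ) (hn : 1 ≤ n)
    (S T : Finset ℕ)
    (hdiv : ∀ i ∈ Finset.Icc 1 n, ∃ s ∈ S, ∃ t ∈ T, (i : ℤ) ∣ (s : ℤ) - t)
    (f : F[X]) (hmonic : f.Monic) (hsq : Squarefree f) (hdeg : f.natDegree = n) :
    f ∣ ∏ s ∈ S, ∏ t ∈ T,
      (X ^ (Fintype.card F) ^ s - X ^ (Fintype.card F) ^ t : F[X]) :=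
  stmt19_general F n S T hdiv f hsq hdeg
end
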